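/- Harmonic-oscillator-type integral: Let a, b, c be real numbers with a > 0, c > 0 and b > 2√(ac), and let η₁ < η₂ be the positive reals with η₁² = (b − √(b² − 4ac))/(2a) and η₂² = (b + √(b² − 4ac))/(2a), i.e. the positive zeros of b − aη² − c/η². Then ∫_{η₁}^{η₂} 2√( b − a η² − c/η² ) dη = π ( b/(2√a) − √c ). -/

import Mathlib

/-!
With `p = η₁²`, `q = η₂²` (so `a (p + q) = b` and `a p q = c` by Vieta), the substitution `ξ = η²`
turns the integral into Sommerfeld's `∫_p^q √(-a + b/ξ - c/ξ²) dξ = √a ∫_p^q √((q-ξ)(ξ-p))/ξ dξ`.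
The latter has the elementary antiderivative `sommerfeldPrimitive p q`, whose two `arcsin`
arguments both run from `-1` to `1` as `ξ` runs from `p` to `q`; each contributes `±π/2` at the
endpoints, and the square-root term vanishes there.
-/

open Real intervalIntegral Set

lemma HasDerivAt.arcsin_of_one_sub_sq_eq {u : ℝ → ℝ} {u' s x : ℝ} (hu : HasDerivAt u u' x)
    (hs : 0 < s) (h : 1 - u x ^ 2 = s ^ 2) : HasDerivAt (fun y => arcsin (u y)) (u' / s) x := by
  have hu1 : u x ^ 2 < 1 := by nlinarith
  exact ((hasDerivAt_arcsin (by nlinarith) (by nlinarith)).comp x hu).congr_deriv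
    (by rw [h, sqrt_sq hs.le]; ring)

noncomputable def sommerfeldPrimitive (p q ξ : ℝ) : ℝ :=
  √((q - ξ) * (ξ - p)) + (p + q) / 2 * arcsin ((2 * ξ - (p + q)) / (q - p))
    - √(p * q) * arcsin ((p + q - 2 * (p * q) / ξ) / (q - p))

section
variable {p q : ℝ}

lemma hasDerivAt_sommerfeldPrimitive {ξ : ℝ} (hp : 0 < p) (hpξ : p < ξ) (hξq : ξ < q) :
    HasDerivAt (sommerfeldPrimitive p q) (√((q - ξ) * (ξ - p)) / ξ) ξ := by
  have hξ : 0 < ξ := hp.trans hpξ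
  have hqp : 0 < q - p := by linarith
  have hpq : 0 < √(p * q) := sqrt_pos.2 (by nlinarith)
  have hg : 0 < (q - ξ) * (ξ - p) := mul_pos (by linarith) (by linarith)
  set t := √((q - ξ) * (ξ - p))
  have ht : 0 < t := sqrt_pos.2 hg
  have ht2 : t ^ 2 = (q - ξ) * (ξ - p) := sq_sqrt hg.le
  have hpq2 : √(p * q) ^ 2 = p * q := sq_sqrt (by nlinarith)
  have hroot : HasDerivAt (fun x => √((q - x) * (x - p))) ((p + q - 2 * ξ) / (2 * t)) ξ :=
    ((((hasDerivAt_id' ξ).const_sub q).mul ((hasDerivAt_id' ξ).sub_const p)).congr_deriv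
      (by ring)).sqrt hg.ne'
  have harc₁ : HasDerivAt (fun x => arcsin ((2 * x - (p + q)) / (q - p)))
      (2 / (q - p) / (2 * t / (q - p))) ξ := by
    refine HasDerivAt.arcsin_of_one_sub_sq_eq ?_ (by positivity) ?_
    · exact ((((hasDerivAt_id' ξ).const_mul 2).sub_const (p + q)).div_const (q - p)).congr_deriv
        (by ring)
    · field_simp; linear_combination (-4) * ht2
  have harc₂ : HasDerivAt (fun x => arcsin ((p + q - 2 * (p * q) / x) / (q - p)))
      (2 * (p * q) / ξ ^ 2 / (q - p) / (2 * √(p * q) * t / ((q - p) * ξ))) ξ := by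
    refine HasDerivAt.arcsin_of_one_sub_sq_eq ?_ (by positivity) ?_
    · exact ((((hasDerivAt_const ξ (2 * (p * q))).div (hasDerivAt_id' ξ) hξ.ne').const_sub
        (p + q)).div_const (q - p)).congr_deriv (by ring)
    · rw [div_pow (2 * √(p * q) * t), mul_pow, mul_pow, hpq2, ht2]; field_simp; ring
  refine ((hroot.add (harc₁.const_mul ((p + q) / 2))).sub
    (harc₂.const_mul (√(p * q)))).congr_deriv ?_
  field_simp
  linear_combination (-2) * ht2

lemma continuousOn_sommerfeldPrimitive (hp : 0 < p) :
    ContinuousOn (sommerfeldPrimitive p q) (Icc p q) := by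
  have hne : ∀ ξ ∈ Icc p q, ξ ≠ 0 := fun ξ hξ => (hp.trans_le hξ.1).ne'
  unfold sommerfeldPrimitive
  fun_prop (disch := assumption)

lemma sommerfeldPrimitive_right (hp : 0 < p) (hpq : p < q) :
    sommerfeldPrimitive p q q = π / 2 * ((p + q) / 2 - √(p * q)) := by
  have h₁ : (2 * q - (p + q)) / (q - p) = 1 := by
    rw [div_eq_one_iff_eq (by linarith)]; ring
  have h₂ : (p + q - 2 * (p * q) / q) / (q - p) = 1 := by
    have hq : q ≠ 0 := by linarith
    rw [div_eq_one_iff_eq (by linarith)]; field_simp; ring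
  simp only [sommerfeldPrimitive, sub_self, zero_mul, sqrt_zero, h₁, h₂, arcsin_one]
  ring

lemma sommerfeldPrimitive_left (hp : 0 < p) (hpq : p < q) :
    sommerfeldPrimitive p q p = -(π / 2 * ((p + q) / 2 - √(p * q))) := by
  have h₁ : (2 * p - (p + q)) / (q - p) = -1 := by
    rw [div_eq_iff (by linarith)]; ring
  have h₂ : (p + q - 2 * (p * q) / p) / (q - p) = -1 := by
    rw [div_eq_iff (by linarith)]; field_simp; ring
  simp only [sommerfeldPrimitive, sub_self, mul_zero, sqrt_zero, h₁, h₂, arcsin_neg_one]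
  ring

theorem integral_sqrt_mul_div_self (hp : 0 < p) (hpq : p < q) :
    ∫ ξ in p..q, √((q - ξ) * (ξ - p)) / ξ = π * ((p + q) / 2 - √(p * q)) := by
  have hint : IntervalIntegrable (fun ξ => √((q - ξ) * (ξ - p)) / ξ) MeasureTheory.volume p q := by
    refine ContinuousOn.intervalIntegrable ?_
    rw [uIcc_of_le hpq.le]
    have hne : ∀ ξ ∈ Icc p q, ξ ≠ 0 := fun ξ hξ => (hp.trans_le hξ.1).ne'
    fun_prop (disch := assumption)
  rw [integral_eq_sub_of_hasDerivAt_of_le hpq.le (continuousOn_sommerfeldPrimitive hp)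
    (fun ξ hξ => hasDerivAt_sommerfeldPrimitive hp hξ.1 hξ.2) hint,
    sommerfeldPrimitive_right hp hpq, sommerfeldPrimitive_left hp hpq]
  ring

theorem integral_sqrt_neg_add_div_sub_div_sq {a b c : ℝ} (ha : 0 < a) (hp : 0 < p) (hpq : p < q)
    (hb : a * (p + q) = b) (hc : a * (p * q) = c) :
    ∫ ξ in p..q, √(-a + b / ξ - c / ξ ^ 2) = π * (b / (2 * √a) - √c) := by
  subst hb hc
  have hfactor : EqOn (fun ξ => √(-a + a * (p + q) / ξ - a * (p * q) / ξ ^ 2))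
      (fun ξ => √a * (√((q - ξ) * (ξ - p)) / ξ)) (uIcc p q) := by
    intro ξ hξ
    rw [uIcc_of_le hpq.le] at hξ
    have hξ : 0 < ξ := hp.trans_le hξ.1
    have : -a + a * (p + q) / ξ - a * (p * q) / ξ ^ 2 = a / ξ ^ 2 * ((q - ξ) * (ξ - p)) := by
      field_simp; ring
    simp only [this, sqrt_mul (div_nonneg ha.le (sq_nonneg ξ)), sqrt_div ha.le, sqrt_sq hξ.le]
    ring
  have hsqrt_a : √a ^ 2 = a := sq_sqrt ha.le
  rw [integral_congr hfactor, integral_const_mul, integral_sqrt_mul_div_self hp hpq,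
    sqrt_mul ha.le]
  field_simp
  linear_combination (p + q) * hsqrt_a
end

lemma quadratic_roots_sum_prod {a b c s : ℝ} (ha : a ≠ 0) (hs : s ^ 2 = b ^ 2 - 4 * a * c) :
    a * ((b - s) / (2 * a) + (b + s) / (2 * a)) = b ∧
      a * ((b - s) / (2 * a) * ((b + s) / (2 * a))) = c := by
  constructor
  · field_simp; ring
  · field_simp; linear_combination -hs

lemma integral_two_mul_sqrt_sub_sub_div_sq (a b c : ℝ) {α β : ℝ} (hα : 0 < α) (hαβ : α ≤ β) :
    ∫ η in α..β, 2 * √(b - a * η ^ 2 - c / η ^ 2)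
      = ∫ ξ in α ^ 2..β ^ 2, √(-a + b / ξ - c / ξ ^ 2) := by
  have hsubst : EqOn (fun η => 2 * √(b - a * η ^ 2 - c / η ^ 2))
      (fun η => ((fun ξ => √(-a + b / ξ - c / ξ ^ 2)) ∘ (· ^ 2)) η * (2 * η)) (uIcc α β) := by
    intro η hη
    rw [uIcc_of_le hαβ] at hη
    have hη : 0 < η := hα.trans_le hη.1
    have : b - a * η ^ 2 - c / η ^ 2 = η ^ 2 * (-a + b / η ^ 2 - c / (η ^ 2) ^ 2) := by
      field_simp; ring
    simp only [Function.comp, this, sqrt_mul (sq_nonneg η), sqrt_sq hη.le]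
    ring
  have hne : ∀ ξ ∈ (· ^ 2) '' uIcc α β, ξ ≠ 0 := by
    rw [uIcc_of_le hαβ]
    rintro _ ⟨η, hη, rfl⟩
    exact pow_ne_zero 2 (hα.trans_le hη.1).ne'
  rw [integral_congr hsubst]
  exact integral_comp_mul_deriv' (fun η _ => by simpa using hasDerivAt_pow 2 η) (by fun_prop)
    (by fun_prop (disch := intro ξ hξ; simp [hne ξ hξ]))

theorem harmonic_oscillator_integral_general (a b c : ℝ) (ha : 0 < a)
    (η₁ η₂ : ℝ) (hη₁pos : 0 < η₁) (hlt : η₁ < η₂)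
    (hη₁ : η₁ ^ 2 = (b - Real.sqrt (b ^ 2 - 4 * a * c)) / (2 * a))
    (hη₂ : η₂ ^ 2 = (b + Real.sqrt (b ^ 2 - 4 * a * c)) / (2 * a)) :
    ∫ η in η₁..η₂, 2 * Real.sqrt (b - a * η ^ 2 - c / η ^ 2)
      = Real.pi * (b / (2 * Real.sqrt a) - Real.sqrt c) := by
  have hsq : η₁ ^ 2 < η₂ ^ 2 := by gcongr
  have hdisc : 0 < √(b ^ 2 - 4 * a * c) := by
    rw [hη₁, hη₂, div_lt_div_iff_of_pos_right (by positivity)] at hsq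
    linarith
  obtain ⟨hsum, hprod⟩ := quadratic_roots_sum_prod ha.ne' (sq_sqrt (sqrt_pos.1 hdisc).le)
  rw [← hη₁, ← hη₂] at hsum hprod
  rw [integral_two_mul_sqrt_sub_sub_div_sq a b c hη₁pos hlt.le]
  exact integral_sqrt_neg_add_div_sub_div_sq ha (by positivity) hsq hsum hprod

/-- Harmonic-oscillator-type integral: for `a, c > 0` and `b > 2√(ac)`, with `η₁ < η₂`
the positive zeros of `b - aη² - c/η²`, one has
`∫_{η₁}^{η₂} 2√(b - aη² - c/η²) dη = π(b/(2√a) - √c)`. -/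
theorem harmonic_oscillator_integral (a b c : ℝ) (ha : 0 < a) (hc : 0 < c)
    (hb : b > 2 * Real.sqrt (a * c))
    (η₁ η₂ : ℝ) (hη₁pos : 0 < η₁) (hη₂pos : 0 < η₂) (hlt : η₁ < η₂)
    (hη₁ : η₁ ^ 2 = (b - Real.sqrt (b ^ 2 - 4 * a * c)) / (2 * a))
    (hη₂ : η₂ ^ 2 = (b + Real.sqrt (b ^ 2 - 4 * a * c)) / (2 * a)) :
    ∫ η in η₁..η₂, 2 * Real.sqrt (b - a * η ^ 2 - c / η ^ 2)
      = Real.pi * (b / (2 * Real.sqrt a) - Real.sqrt c) :=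
  harmonic_oscillator_integral_general a b c ha η₁ η₂ hη₁pos hlt hη₁ hη₂
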